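/- arXiv:2408.08718 — 5 statements merged into one kernel-verified Lean document; each statement's English description precedes it below -/
import Mathlib

section
/- Let r ≥ 1 and let e_k = e_k(x_1,…,x_r) denote the k-th elementary symmetric polynomial in ℤ[x_1,…,x_r], with the conventions e_0 = 1 and e_k = 0 for k < 0 or k > r. Then ∏_{1≤i<j≤r} (x_i + x_j) = det M, where M is the (r−1)×(r−1) matrix with entries M_{ij} = e_{r−2i+j}(x_1,…,x_r) for 1 ≤ i, j ≤ r−1 (for r = 1 both sides are the empty product 1). -/
open MvPolynomial

/-- The `k`-th elementary symmetric polynomial in `r` variables over `ℤ`, with the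
conventions `e_0 = 1` and `e_k = 0` for `k < 0` (the vanishing for `k > r` already
holds for `MvPolynomial.esymm`). -/
noncomputable def esymmZ (r : ℕ) (k : ℤ) : MvPolynomial (Fin r) ℤ :=
  if 0 ≤ k then esymm (Fin r) ℤ k.toNat else 0

/-!
Let `F(t) = ∏ₘ (t + xₘ) = ∑_d e_{r-d} t^d` and `g_k(x; t) = ∏_{m ≠ k} (t - xₘ)`. Since
`(t + xₘ)(t - xₘ) = t² - xₘ²`, we have `F · g_k(x; t) = (t + x_k) · g_k(x²; t²)`, and comparing
the coefficients of `t^{2i+1}` gives `M · B(x) = B(x²)`, where `M i j = e_{r-1-2i+j}` and the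
columns of `B(x)` are the coefficient vectors of the `g_k(x; ·)`. Multiplying by the Vandermonde
matrix makes `B(x)` diagonal: `det V(x) · det B(x) = D := ∏_k ∏_{m ≠ k} (x_k - x_m)`. With
`P = ∏_{i<j} (x_i + x_j)` one has `det V(x²) = det V(x) · P` and the analogue of `D` for `x²`
equals `D · P²`, so `det M · D · P = D · P²`, and `D · P ≠ 0` in `ℤ[x]`. Finally `M` has last row
`(0, …, 0, 1)`, so its determinant is that of the `(r-1) × (r-1)` matrix of the statement.
-/

open Finset Matrix

section Products

variable {β : Type*} [CommMonoid β] {N : ℕ}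

theorem prod_filter_lt_eq_prod_prod_Ioi (f : Fin N → Fin N → β) :
    ∏ p ∈ univ.filter (fun p : Fin N × Fin N => p.1 < p.2), f p.1 p.2 =
      ∏ i, ∏ j ∈ Ioi i, f i j := by
  rw [prod_filter, Fintype.prod_prod_type]
  exact prod_congr rfl fun i _ => by rw [← filter_lt_eq_Ioi, prod_filter]

theorem prod_prod_erase_eq_sq_of_symm (f : Fin N → Fin N → β) (hf : ∀ i j, f i j = f j i) :
    ∏ k, ∏ m ∈ univ.erase k, f k m = (∏ i, ∏ j ∈ Ioi i, f i j) ^ 2 := by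
  have hsplit (k : Fin N) : univ.erase k = (Ioi k).disjUnion (Iio k) (disjoint_Ioi_Iio k) := by
    ext m
    simp only [mem_erase, mem_univ, and_true, disjUnion_eq_union, mem_union, mem_Ioi, mem_Iio]
    omega
  simp_rw [hsplit, prod_disjUnion, prod_mul_distrib, sq]
  congr 1
  calc ∏ k, ∏ m ∈ Iio k, f k m = ∏ m, ∏ k ∈ Ioi m, f k m := prod_comm' fun k m => by simp
    _ = ∏ m, ∏ k ∈ Ioi m, f m k := prod_congr rfl fun m _ => prod_congr rfl fun k _ => hf k m

end Products

theorem Matrix.det_eq_det_submatrix_castSucc {R : Type*} [CommRing R] {n : ℕ}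
    (A : Matrix (Fin (n + 1)) (Fin (n + 1)) R) (hA : A (Fin.last n) = Pi.single (Fin.last n) 1) :
    A.det = (A.submatrix Fin.castSucc Fin.castSucc).det := by
  rw [det_succ_row A (Fin.last n), sum_eq_single (Fin.last n)]
  · simp [hA, Fin.succAbove_last, ← two_mul, pow_mul]
  · intro j _ hj
    simp [hA, Pi.single_eq_of_ne hj]
  · simp

section Nodal

open Polynomial Lagrange

variable {R : Type*} [CommRing R]

theorem prod_X_add_C_mul_nodal_erase {ι : Type*} [Fintype ι] [DecidableEq ι] (x : ι → R) (k : ι) :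
    (∏ m, (Polynomial.X + Polynomial.C (x m))) * nodal (univ.erase k) x =
      (Polynomial.X + Polynomial.C (x k)) * expand R 2 (nodal (univ.erase k) (x ^ 2)) := by
  rw [← mul_prod_erase univ _ (mem_univ k), mul_assoc, nodal, nodal, ← prod_mul_distrib,
    map_prod]
  congr 1
  refine prod_congr rfl fun m _ => ?_
  simp only [Pi.pow_apply, map_sub, map_pow, Polynomial.expand_X, Polynomial.expand_C]
  ring

theorem coeff_X_add_C_mul_expand_two_odd (a : R) (p : R[X]) (i : ℕ) :
    ((Polynomial.X + Polynomial.C a) * expand R 2 p).coeff (2 * i + 1) = p.coeff i := by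
  rw [add_mul, Polynomial.coeff_add, Polynomial.coeff_X_mul, Polynomial.coeff_C_mul,
    coeff_expand two_pos, coeff_expand two_pos, if_pos (dvd_mul_right 2 i), if_neg (by omega),
    Nat.mul_div_cancel_left _ two_pos, mul_zero, add_zero]

theorem coeff_mul_eq_sum_range_coeff_mul_coeff_X_pow_mul (p q : R[X]) {n : ℕ}
    (hq : q.natDegree < n) (d : ℕ) :
    (p * q).coeff d = ∑ j ∈ range n, q.coeff j * (Polynomial.X ^ j * p).coeff d := by
  conv_lhs => rw [as_sum_range_C_mul_X_pow' q hq]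
  rw [mul_sum, finsetSum_coeff]
  exact sum_congr rfl fun j _ => by rw [mul_left_comm, Polynomial.coeff_C_mul, mul_comm p]

variable {N : ℕ}

theorem natDegree_nodal_erase_lt [Nontrivial R] (x : Fin N → R) (k : Fin N) :
    (nodal (univ.erase k) x).natDegree < N := by
  rw [natDegree_nodal]
  simpa [card_erase_of_mem] using k.pos

noncomputable def nodalCoeffMatrix (x : Fin N → R) : Matrix (Fin N) (Fin N) R :=
  of fun j k => (nodal (univ.erase k) x).coeff j

theorem vandermonde_mul_nodalCoeffMatrix [Nontrivial R] (x : Fin N → R) :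
    vandermonde x * nodalCoeffMatrix x = diagonal fun k => ∏ m ∈ univ.erase k, (x k - x m) := by
  ext l k
  have heval : (vandermonde x * nodalCoeffMatrix x) l k = (nodal (univ.erase k) x).eval (x l) := by
    rw [mul_apply, eval_eq_sum_range' (natDegree_nodal_erase_lt x k), ← Fin.sum_univ_eq_sum_range]
    simp only [vandermonde_apply, nodalCoeffMatrix, of_apply, mul_comm]
  rw [heval]
  rcases eq_or_ne l k with rfl | hlk
  · rw [diagonal_apply_eq, eval_nodal]
  · rw [diagonal_apply_ne _ hlk, eval_nodal_at_node (mem_erase.2 ⟨hlk, mem_univ l⟩)]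

theorem det_vandermonde_mul_det_nodalCoeffMatrix [Nontrivial R] (x : Fin N → R) :
    det (vandermonde x) * det (nodalCoeffMatrix x) = ∏ k, ∏ m ∈ univ.erase k, (x k - x m) := by
  rw [← det_mul, vandermonde_mul_nodalCoeffMatrix, det_diagonal]

theorem det_vandermonde_sq (x : Fin N → R) :
    det (vandermonde (x ^ 2)) = det (vandermonde x) * ∏ i, ∏ j ∈ Ioi i, (x i + x j) := by
  simp_rw [det_vandermonde, ← prod_mul_distrib]
  exact prod_congr rfl fun i _ => prod_congr rfl fun j _ => by rw [Pi.pow_apply, Pi.pow_apply]; ring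

theorem prod_prod_erase_sq_sub_sq (x : Fin N → R) :
    ∏ k, ∏ m ∈ univ.erase k, (x k ^ 2 - x m ^ 2) =
      (∏ k, ∏ m ∈ univ.erase k, (x k - x m)) * (∏ i, ∏ j ∈ Ioi i, (x i + x j)) ^ 2 := by
  rw [← prod_prod_erase_eq_sq_of_symm _ fun i j => add_comm (x i) (x j)]
  simp_rw [← prod_mul_distrib, sq_sub_sq, mul_comm]

end Nodal

theorem MvPolynomial.esymm_eq_zero_of_card_lt {σ R : Type*} [CommSemiring R] [Fintype σ] {k : ℕ}
    (hk : Fintype.card σ < k) : esymm σ R k = 0 := by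
  rw [esymm, powersetCard_eq_empty.2 (by simpa using hk), sum_empty]

-- Vieta's formula, together with the conventions `e_k = 0` for `k < 0` and `k > r`.
theorem esymmZ_eq_coeff_X_pow_mul (r j d : ℕ) :
    esymmZ r ((r : ℤ) + j - d) =
      (Polynomial.X ^ j * ∏ m : Fin r, (Polynomial.X + Polynomial.C (X m))).coeff d := by
  rw [Polynomial.coeff_X_pow_mul', esymmZ]
  split_ifs with hz hjd hjd
  · by_cases hdr : d - j ≤ r
    · rw [MvPolynomial.prod_X_add_C_coeff ℤ (Fin r) (d - j) (by simpa using hdr), Fintype.card_fin]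
      congr 1
      omega
    · omega
  · exact esymm_eq_zero_of_card_lt (by rw [Fintype.card_fin]; omega)
  · rw [Polynomial.coeff_eq_zero_of_natDegree_lt]
    rw [Polynomial.natDegree_prod_of_monic _ _ fun m _ => Polynomial.monic_X_add_C _]
    simp only [Polynomial.natDegree_X_add_C, sum_const, card_univ, Fintype.card_fin, smul_eq_mul,
      mul_one]
    omega
  · omega

-- `M i j = e_{r-1-2i+j}` with 0-based indices: for `r = n + 1` this is the matrix of the theorem
-- bordered by a last row `(0, …, 0, 1)`.
noncomputable def staircaseMatrix (r : ℕ) : Matrix (Fin r) (Fin r) (MvPolynomial (Fin r) ℤ) :=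
  of fun i j => esymmZ r ((r : ℤ) - 1 - 2 * (i : ℤ) + (j : ℤ))

theorem staircaseMatrix_mul_nodalCoeffMatrix (r : ℕ) :
    staircaseMatrix r * nodalCoeffMatrix X = nodalCoeffMatrix (X ^ 2) := by
  ext i k : 1
  simp only [mul_apply, staircaseMatrix, nodalCoeffMatrix, of_apply]
  rw [← coeff_X_add_C_mul_expand_two_odd (X k),
    ← prod_X_add_C_mul_nodal_erase,
    coeff_mul_eq_sum_range_coeff_mul_coeff_X_pow_mul _ _ (natDegree_nodal_erase_lt X k),
    ← Fin.sum_univ_eq_sum_range]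
  refine sum_congr rfl fun j _ => ?_
  rw [← esymmZ_eq_coeff_X_pow_mul, mul_comm]
  congr 2
  push_cast
  ring

theorem staircaseMatrix_last (n : ℕ) :
    staircaseMatrix (n + 1) (Fin.last n) = Pi.single (Fin.last n) 1 := by
  ext j : 1
  rcases eq_or_ne j (Fin.last n) with rfl | hj
  · rw [staircaseMatrix, of_apply, Pi.single_eq_same, Fin.val_last,
      show ((n + 1 : ℕ) : ℤ) - 1 - 2 * n + n = 0 by push_cast; ring]
    simp [esymmZ]
  · have := Fin.val_lt_last hj
    rw [staircaseMatrix, of_apply, Pi.single_eq_of_ne hj, Fin.val_last, esymmZ,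
      if_neg (by push_cast; omega)]

theorem submatrix_castSucc_staircaseMatrix (n : ℕ) :
    (staircaseMatrix (n + 1)).submatrix Fin.castSucc Fin.castSucc =
      of fun i j : Fin n =>
        esymmZ (n + 1) (((n + 1 : ℕ) : ℤ) - 2 * ((i : ℤ) + 1) + ((j : ℤ) + 1)) := by
  ext i j : 1
  simp only [staircaseMatrix, submatrix_apply, of_apply, Fin.val_castSucc]
  congr 1
  push_cast
  ring

theorem det_staircaseMatrix (r : ℕ) :
    det (staircaseMatrix r) = ∏ i, ∏ j ∈ Ioi i, (X i + X j) := by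
  set x : Fin r → MvPolynomial (Fin r) ℤ := X
  set P := ∏ i, ∏ j ∈ Ioi i, (x i + x j)
  set D := ∏ k, ∏ m ∈ univ.erase k, (x k - x m)
  have hVB : det (vandermonde x) * det (nodalCoeffMatrix x) = D :=
    det_vandermonde_mul_det_nodalCoeffMatrix x
  have hVB2 : det (vandermonde (x ^ 2)) * det (nodalCoeffMatrix (x ^ 2)) = D * P ^ 2 := by
    rw [det_vandermonde_mul_det_nodalCoeffMatrix]
    simp only [Pi.pow_apply]
    exact prod_prod_erase_sq_sub_sq x
  have hV2 : det (vandermonde (x ^ 2)) = det (vandermonde x) * P := det_vandermonde_sq x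
  have hMB :
      det (staircaseMatrix r) * det (nodalCoeffMatrix x) = det (nodalCoeffMatrix (x ^ 2)) := by
    rw [← det_mul, staircaseMatrix_mul_nodalCoeffMatrix]
  have hD : D ≠ 0 := prod_ne_zero_iff.2 fun k _ => prod_ne_zero_iff.2 fun m hm =>
    sub_ne_zero.2 (X_injective.ne (ne_of_mem_erase hm).symm)
  have hP : P ≠ 0 := prod_ne_zero_iff.2 fun i _ => prod_ne_zero_iff.2 fun j _ h => by
    simpa [x] using congrArg (eval fun _ => (1 : ℤ)) h
  -- `det M * (D * P) = det V(x²) * det B(x²) = D * P ^ 2`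
  refine mul_right_cancel₀ (mul_ne_zero hD hP) ?_
  linear_combination det (vandermonde x) * P * hMB - P * det (staircaseMatrix r) * hVB
    - det (nodalCoeffMatrix (x ^ 2)) * hV2 + hVB2

/-- **Second Jacobi–Trudi formula for the staircase partition.**
For `r ≥ 1`, `∏_{1 ≤ i < j ≤ r} (x_i + x_j) = det M`, where `M` is the
`(r−1) × (r−1)` matrix with entries `M_{ij} = e_{r−2i+j}(x_1,…,x_r)`
for `1 ≤ i, j ≤ r−1`. -/
theorem jacobi_trudi_staircase (r : ℕ) (hr : 1 ≤ r) :
    (∏ p ∈ Finset.univ.filter (fun p : Fin r × Fin r => p.1 < p.2), (X p.1 + X p.2)) =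
      Matrix.det (Matrix.of fun i j : Fin (r - 1) =>
        esymmZ r ((r : ℤ) - 2 * ((i : ℤ) + 1) + ((j : ℤ) + 1))) := by
  obtain ⟨n, rfl⟩ : ∃ n, r = n + 1 := ⟨r - 1, by omega⟩
  rw [prod_filter_lt_eq_prod_prod_Ioi (fun i j => X i + X j), ← det_staircaseMatrix,
    det_eq_det_submatrix_castSucc _ (staircaseMatrix_last n), submatrix_castSucc_staircaseMatrix]
  -- `Fin (n + 1 - 1)` and `Fin n` agree only up to definitional unfolding
  rfl
end

section
/- Let g ≥ 1. The 2^{g−1} classes λ_J := ∏_{j∈J} λ_j, for J ranging over all subsets of {1,…,g−1}, form a basis of ℛ_g as a ℚ-vector space; in particular dim_ℚ ℛ_g = 2^{g−1}. -/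
open MvPolynomial

noncomputable section

/-- The class `λ_m` in `ℚ[λ_1, …, λ_h]`, with the conventions `λ_0 = 1` and
`λ_m = 0` for `m > h`.  Here `λ_m` for `1 ≤ m ≤ h` is the variable `X ⟨m-1⟩`. -/
def lam (h m : ℕ) : MvPolynomial (Fin h) ℚ :=
  if _h0 : m = 0 then 1
  else if _hm : m ≤ h then X ⟨m - 1, by omega⟩ else 0

/-- The degree-`d` Mumford relation `m_d = Σ_{i+j=d} (−1)^j λ_i λ_j`. -/
def mumford (h d : ℕ) : MvPolynomial (Fin h) ℚ :=
  ∑ i ∈ Finset.range (d + 1), (-1 : MvPolynomial (Fin h) ℚ) ^ (d - i) * lam h i * lam h (d - i)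

/-- The Mumford ideal `I_h`, generated by the relations `m_d` for `1 ≤ d ≤ 2h`. -/
def mumfordIdeal (h : ℕ) : Ideal (MvPolynomial (Fin h) ℚ) :=
  Ideal.span (mumford h '' Set.Icc 1 (2 * h))

/-- `𝒬_h = ℚ[λ_1,…,λ_h]/I_h`. -/
abbrev Qring (h : ℕ) := MvPolynomial (Fin h) ℚ ⧸ mumfordIdeal h

/-- The ideal `I_g + (λ_g)`. -/
def Rideal (g : ℕ) : Ideal (MvPolynomial (Fin g) ℚ) :=
  mumfordIdeal g ⊔ Ideal.span {lam g g}

/-- `ℛ_g = ℚ[λ_1,…,λ_g]/(I_g + (λ_g))`, van der Geer's presentation of the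
tautological ring `R*(𝒜_g)`. -/
abbrev Rring (g : ℕ) := MvPolynomial (Fin g) ℚ ⧸ Rideal g

/-- The degree-`k` graded piece of `ℛ_g`, for the grading with `deg λ_i = i`:
the image of the weighted-homogeneous polynomials of weighted degree `k`. -/
def homogR (g k : ℕ) : Submodule ℚ (Rring g) :=
  Submodule.map (Ideal.Quotient.mkₐ ℚ (Rideal g)).toLinearMap
    (weightedHomogeneousSubmodule ℚ (fun i : Fin g => (i : ℕ) + 1) k)

/-- The degree-`k` graded piece of `𝒬_h`, for the grading with `deg λ_i = i`. -/
def homogQ (h k : ℕ) : Submodule ℚ (Qring h) :=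
  Submodule.map (Ideal.Quotient.mkₐ ℚ (mumfordIdeal h)).toLinearMap
    (weightedHomogeneousSubmodule ℚ (fun i : Fin h => (i : ℕ) + 1) k)

/-!
Give `λ_m` the weight `m (2g - m)`, which is strictly concave in `m`. The odd Mumford relations
vanish identically, and `(-1)^j m_{2j}` expresses `λ_j²` as a combination of products
`λ_i λ_{2j-i}` with `i ≠ j`, all of smaller weight. Expanding squares and killing `λ_g` thus
reduces every monomial to a square-free monomial in `λ_1, …, λ_{g-1}`. The reduction is
confluent (by induction on the weight, expanding two different squares in either order gives the
same result), so it defines a linear retraction onto the span of these monomials whose kernel is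
exactly `I_g + (λ_g)`.
-/

namespace Mumford

section Retraction

variable {R M Q ι : Type*} [Ring R] [AddCommGroup M] [Module R M] [AddCommGroup Q]
  [Module R Q] (π : M →ₗ[R] Q) (N : M →ₗ[R] M) {b : ι → M}

theorem linearIndependent_comp_of_retraction (hN : ∀ x, π x = 0 → N x = 0)
    (hb : LinearIndependent R b) (hfix : ∀ i, N (b i) = b i) :
    LinearIndependent R (π ∘ b) := by
  refine hb.map (Submodule.disjoint_def.mpr fun x hx hπx => ?_)
  have hNx : N x = x := LinearMap.eqOn_span (f := N) (g := LinearMap.id)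
    (by rintro _ ⟨i, rfl⟩; exact hfix i) hx
  rw [← hNx, hN x hπx]

theorem span_range_comp_eq_top (hπ : Function.Surjective π) (hN : ∀ x, π (N x) = π x)
    (hrange : ∀ x, N x ∈ Submodule.span R (Set.range b)) :
    Submodule.span R (Set.range (π ∘ b)) = ⊤ := by
  rw [Set.range_comp, ← Submodule.map_span, eq_top_iff]
  rintro y -
  obtain ⟨x, rfl⟩ := hπ y
  exact hN x ▸ Submodule.mem_map_of_mem (hrange x)

end Retraction

theorem map_eq_zero_of_mem_ideal_span {A M F : Type*} [CommSemiring A] [AddCommMonoid M]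
    [FunLike F A M] [AddMonoidHomClass F A M] (f : F) {S : Set A}
    (hS : ∀ s ∈ S, ∀ q, f (q * s) = 0) {p : A} (hp : p ∈ Ideal.span S) : f p = 0 := by
  suffices ∀ q, f (q * p) = 0 by simpa using this 1
  induction hp using Submodule.span_induction with
  | mem s hs => exact hS s hs
  | zero => simp
  | add x y _ _ hx hy => intro q; rw [mul_add, map_add, hx, hy, add_zero]
  | smul r x _ hx => intro q; rw [smul_eq_mul, ← mul_assoc]; exact hx _

lemma monomial_eq_smul_one {R σ : Type*} [CommSemiring R] (d : σ →₀ ℕ) (c : R) :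
    (monomial d c : MvPolynomial σ R) = c • monomial d 1 := by
  rw [smul_monomial, smul_eq_mul, mul_one]

section Relations

variable (g : ℕ)

lemma lam_zero : lam g 0 = 1 := by simp [lam]

lemma lam_of_le {m : ℕ} (hm0 : m ≠ 0) (hm : m ≤ g) : lam g m = X ⟨m - 1, by omega⟩ := by
  rw [lam, dif_neg hm0, dif_pos hm]

lemma lam_of_lt {m : ℕ} (hm : g < m) : lam g m = 0 := by
  rw [lam, dif_neg (by omega), dif_neg (by omega)]

lemma mumford_of_odd {d : ℕ} (hd : Odd d) : mumford g d = 0 := by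
  rw [mumford]
  refine Finset.sum_involution (fun i _ => d - i) (fun i hi => ?_) (fun i hi _ => ?_)
    (fun i hi => ?_) (fun i hi => ?_) <;> rw [Finset.mem_range] at hi
  · obtain ⟨k, rfl⟩ := hd
    rw [show 2 * k + 1 - (2 * k + 1 - i) = i by omega]
    rcases Nat.even_or_odd i with ⟨l, rfl⟩ | ⟨l, rfl⟩
    · rw [show 2 * k + 1 - (l + l) = 2 * (k - l) + 1 by omega]; simp [pow_succ, pow_mul]; ring
    · rw [show 2 * k + 1 - (2 * l + 1) = 2 * (k - l) by omega]; simp [pow_succ, pow_mul]; ring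
  · obtain ⟨k, rfl⟩ := hd; omega
  · rw [Finset.mem_range]; omega
  · omega

def sqExpansion (j : ℕ) : MvPolynomial (Fin g) ℚ :=
  -∑ i ∈ (Finset.range (2 * j + 1)).erase j,
    (-1) ^ j * ((-1) ^ (2 * j - i) * lam g i * lam g (2 * j - i))

lemma lam_sq_sub_sqExpansion (j : ℕ) :
    lam g j ^ 2 - sqExpansion g j = (-1) ^ j * mumford g (2 * j) := by
  rw [sqExpansion, mumford, Finset.mul_sum,
    ← Finset.add_sum_erase _ _ (Finset.mem_range.mpr (by omega : j < 2 * j + 1)),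
    show 2 * j - j = j by omega, sub_neg_eq_add, ← mul_assoc, ← mul_assoc, ← pow_add,
    Even.neg_one_pow ⟨j, rfl⟩, one_mul, sq]

lemma sqExpansion_self : sqExpansion g g = 0 := by
  rw [sqExpansion, neg_eq_zero]
  refine Finset.sum_eq_zero fun i hi => ?_
  obtain ⟨hig, hi⟩ := Finset.mem_erase.mp hi
  rw [Finset.mem_range] at hi
  rcases lt_or_gt_of_ne hig with hlt | hlt
  · rw [lam_of_lt g (m := 2 * g - i) (by omega)]; simp
  · rw [lam_of_lt g hlt]; simp

end Relations

lemma lam_succ {g : ℕ} (j : Fin g) : lam g (j + 1) = X j := by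
  rw [lam_of_le g j.val.succ_ne_zero j.isLt]
  rfl

section Weight

variable (g : ℕ)

def lamWeight (m : ℕ) : ℕ := m * (2 * g - m)

def monoWeight : (Fin g →₀ ℕ) →+ ℕ := Finsupp.weight fun i : Fin g => lamWeight g (i + 1)

lemma monoWeight_single (i : Fin g) (n : ℕ) :
    monoWeight g (Finsupp.single i n) = n * lamWeight g (i + 1) :=
  Finsupp.weight_single _ _ _

lemma lamWeight_add_lt {x y j : ℕ} (hxy : x + y = 2 * j) (hne : x ≠ y) (hx : x ≤ g)
    (hy : y ≤ g) : lamWeight g x + lamWeight g y < 2 * lamWeight g j := by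
  unfold lamWeight
  have hj : j ≤ g := by omega
  zify [(by omega : x ≤ 2 * g), (by omega : y ≤ 2 * g), (by omega : j ≤ 2 * g)]
  have hsq : (0 : ℤ) < (x - y) ^ 2 := by
    have : (x : ℤ) ≠ y := by exact_mod_cast hne
    positivity
  have hxy' : (x : ℤ) + y = 2 * j := by exact_mod_cast hxy
  nlinarith

lemma exists_lam_eq_monomial {m : ℕ} (hm : m ≤ g) :
    ∃ e, lam g m = monomial e 1 ∧ monoWeight g e = lamWeight g m := by
  rcases Nat.eq_zero_or_pos m with rfl | hm0
  · exact ⟨0, lam_zero g, by simp [lamWeight]⟩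
  · refine ⟨Finsupp.single ⟨m - 1, by omega⟩ 1, lam_of_le g hm0.ne' hm, ?_⟩
    rw [monoWeight_single, one_mul, Fin.val_mk, Nat.sub_add_cancel hm0]

lemma monoWeight_lt_of_mem_support_sqExpansion {j : Fin g} {e : Fin g →₀ ℕ}
    (he : e ∈ (sqExpansion g (j + 1)).support) :
    monoWeight g e < monoWeight g (Finsupp.single j 2) := by
  classical
  rw [monoWeight_single]
  generalize (j : ℕ) + 1 = m at he ⊢
  rw [sqExpansion, MvPolynomial.support_neg] at he
  obtain ⟨i, hi, he⟩ := Finset.mem_biUnion.mp (MvPolynomial.support_sum he)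
  obtain ⟨hij, hi⟩ := Finset.mem_erase.mp hi
  rw [Finset.mem_range] at hi
  by_cases hbig : g < i ∨ g < 2 * m - i
  · rcases hbig with hbig | hbig <;> simp [lam_of_lt g hbig] at he
  obtain ⟨e₁, he₁, hw₁⟩ := exists_lam_eq_monomial g (m := i) (by omega)
  obtain ⟨e₂, he₂, hw₂⟩ := exists_lam_eq_monomial g (m := 2 * m - i) (by omega)
  have hsupp : ∀ k : ℕ, ((-1 : MvPolynomial (Fin g) ℚ) ^ k * monomial (e₁ + e₂) 1).support
      = {e₁ + e₂} := by
    intro k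
    rcases neg_one_pow_eq_or (MvPolynomial (Fin g) ℚ) k with h | h <;>
      simp [h, MvPolynomial.support_monomial]
  rw [he₁, he₂, mul_assoc, monomial_mul, one_mul, ← mul_assoc, ← pow_add, hsupp,
    Finset.mem_singleton] at he
  rw [he, map_add, hw₁, hw₂]
  exact lamWeight_add_lt g (by omega) (by omega) (by omega) (by omega)

lemma monoWeight_lt_of_mem_support_reduction {d : Fin g →₀ ℕ} {j : Fin g} (hj : 2 ≤ d j)
    {e : Fin g →₀ ℕ}
    (he : e ∈ (monomial (d - Finsupp.single j 2) 1 * sqExpansion g (j + 1)).support) :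
    monoWeight g e < monoWeight g d := by
  classical
  obtain ⟨a, ha, f, hf, rfl⟩ := Finset.mem_add.mp (MvPolynomial.support_mul _ _ he)
  rw [MvPolynomial.support_monomial, if_neg one_ne_zero, Finset.mem_singleton] at ha
  have hd : d = (d - Finsupp.single j 2) + Finsupp.single j 2 :=
    (tsub_add_cancel_of_le (Finsupp.single_le_iff.mpr hj)).symm
  have hf := monoWeight_lt_of_mem_support_sqExpansion g hf
  rw [hd, ha, map_add, map_add]
  omega

end Weight

section NormalForm

variable (h : ℕ)

-- Which square is expanded does not matter, by `nfMonomial_add_single_two`.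
def nfMonomial (d : Fin (h + 1) →₀ ℕ) : MvPolynomial (Fin (h + 1)) ℚ :=
  if d (Fin.last h) ≠ 0 then 0
  else if hs : ∃ j, 2 ≤ d j then
    let p := monomial (d - Finsupp.single hs.choose 2) 1 * sqExpansion (h + 1) (hs.choose + 1)
    ∑ e ∈ p.support.attach, p.coeff e.1 • nfMonomial e.1
  else monomial d 1
termination_by monoWeight (h + 1) d
decreasing_by exact monoWeight_lt_of_mem_support_reduction (h + 1) hs.choose_spec e.2

def normalForm : MvPolynomial (Fin (h + 1)) ℚ →ₗ[ℚ] MvPolynomial (Fin (h + 1)) ℚ :=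
  (basisMonomials (Fin (h + 1)) ℚ).constr ℚ (nfMonomial h)

lemma normalForm_apply (p : MvPolynomial (Fin (h + 1)) ℚ) :
    normalForm h p = ∑ d ∈ p.support, p.coeff d • nfMonomial h d := by
  rw [normalForm, Module.Basis.constr_apply]
  rfl

lemma normalForm_monomial (d : Fin (h + 1) →₀ ℕ) (c : ℚ) :
    normalForm h (monomial d c) = c • nfMonomial h d := by
  rw [monomial_eq_smul_one, map_smul, normalForm]
  congr 1
  exact (basisMonomials _ ℚ).constr_basis ℚ _ d

lemma normalForm_monomial_mul (a : Fin (h + 1) →₀ ℕ) (q : MvPolynomial (Fin (h + 1)) ℚ) :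
    normalForm h (monomial a 1 * q) = ∑ e ∈ q.support, q.coeff e • nfMonomial h (a + e) := by
  conv_lhs => rw [q.as_sum, Finset.mul_sum, map_sum]
  simp only [monomial_mul, one_mul, normalForm_monomial]

lemma nfMonomial_of_last_ne_zero {d : Fin (h + 1) →₀ ℕ} (hd : d (Fin.last h) ≠ 0) :
    nfMonomial h d = 0 := by
  rw [nfMonomial, if_pos hd]

lemma nfMonomial_of_le_one {d : Fin (h + 1) →₀ ℕ} (hd : d (Fin.last h) = 0)
    (hle : ∀ i, d i ≤ 1) : nfMonomial h d = monomial d 1 := by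
  rw [nfMonomial, if_neg (not_not.mpr hd),
    dif_neg (not_exists.mpr fun i => by have := hle i; omega)]

lemma exists_nfMonomial_eq_normalForm {d : Fin (h + 1) →₀ ℕ} (hd : d (Fin.last h) = 0)
    {j : Fin (h + 1)} (hj : 2 ≤ d j) : ∃ i, 2 ≤ d i ∧ nfMonomial h d =
      normalForm h (monomial (d - Finsupp.single i 2) 1 * sqExpansion (h + 1) (i + 1)) := by
  have hs : ∃ j, 2 ≤ d j := ⟨j, hj⟩
  refine ⟨hs.choose, hs.choose_spec, ?_⟩
  rw [nfMonomial, if_neg (not_not.mpr hd), dif_pos hs, normalForm_apply]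
  exact Finset.sum_attach _ fun e => coeff e _ • nfMonomial h e

lemma normalForm_monomial_mul_eq_sum_sum {b u : Fin (h + 1) →₀ ℕ}
    {p q : MvPolynomial (Fin (h + 1)) ℚ}
    (H : ∀ e ∈ p.support, nfMonomial h (b + e + u) = normalForm h (monomial (b + e) 1 * q)) :
    normalForm h (monomial (b + u) 1 * p) = ∑ e ∈ p.support, ∑ f ∈ q.support,
      (p.coeff e * q.coeff f) • nfMonomial h (b + e + f) := by
  rw [normalForm_monomial_mul]
  refine Finset.sum_congr rfl fun e he => ?_
  rw [add_right_comm, H e he, normalForm_monomial_mul, Finset.smul_sum]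
  simp only [smul_smul]

theorem nfMonomial_add_single_two (a : Fin (h + 1) →₀ ℕ) (j : Fin (h + 1)) :
    nfMonomial h (a + Finsupp.single j 2) =
      normalForm h (monomial a 1 * sqExpansion (h + 1) (j + 1)) := by
  induction hn : monoWeight (h + 1) (a + Finsupp.single j 2) using Nat.strong_induction_on
    generalizing a j with
  | _ n IH =>
  rcases eq_or_ne ((a + Finsupp.single j 2 : Fin (h + 1) →₀ ℕ) (Fin.last h)) 0 with hl | hl
  swap
  · rw [nfMonomial_of_last_ne_zero h hl]
    obtain rfl | hjl := eq_or_ne j (Fin.last h)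
    · rw [Fin.val_last, sqExpansion_self, mul_zero, map_zero]
    · have ha : a (Fin.last h) ≠ 0 := by
        simpa [Finsupp.single_apply, hjl] using hl
      rw [normalForm_monomial_mul]
      refine (Finset.sum_eq_zero fun e _ => ?_).symm
      rw [nfMonomial_of_last_ne_zero h (d := a + e) (by simp [ha]), smul_zero]
  obtain ⟨i, hi, hd⟩ := exists_nfMonomial_eq_normalForm h hl (j := j) (by simp)
  rw [hd]
  obtain rfl | hij := eq_or_ne i j
  · rw [add_tsub_cancel_right]
  have hai : 2 ≤ a i := by simpa [Finsupp.single_apply, hij.symm] using hi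
  obtain ⟨b, rfl⟩ : ∃ b, a = b + Finsupp.single i 2 :=
    ⟨_, (tsub_add_cancel_of_le (Finsupp.single_le_iff.mpr hai)).symm⟩
  have expand : ∀ k l : Fin (h + 1), monoWeight (h + 1) (b + Finsupp.single k 2 + Finsupp.single l 2) = n →
      ∀ e ∈ (sqExpansion (h + 1) (k + 1)).support, nfMonomial h (b + e + Finsupp.single l 2) =
        normalForm h (monomial (b + e) 1 * sqExpansion (h + 1) (l + 1)) := fun k l hkl e he => by
    refine IH _ ?_ _ _ rfl
    have := monoWeight_lt_of_mem_support_sqExpansion (h + 1) he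
    simp only [← hkl, map_add] at this ⊢
    omega
  -- Expanding the squares at `i` and at `j` in either order gives the same double sum.
  rw [add_right_comm, add_tsub_cancel_right,
    normalForm_monomial_mul_eq_sum_sum h (expand i j hn),
    normalForm_monomial_mul_eq_sum_sum h (expand j i (by rw [add_right_comm, hn])),
    Finset.sum_comm]
  simp only [mul_comm, add_right_comm b]

lemma normalForm_mul_X_sq_sub_sqExpansion (q : MvPolynomial (Fin (h + 1)) ℚ)
    (j : Fin (h + 1)) : normalForm h (q * (X j ^ 2 - sqExpansion (h + 1) (j + 1))) = 0 := by
  induction q using MvPolynomial.induction_on' with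
  | monomial a c =>
    rw [monomial_eq_smul_one, smul_mul_assoc, map_smul, mul_sub,
      X_pow_eq_monomial, monomial_mul, one_mul, map_sub, normalForm_monomial, one_smul,
      nfMonomial_add_single_two, sub_self, smul_zero]
  | add p q hp hq => rw [add_mul, map_add, hp, hq, add_zero]

lemma normalForm_mul_X_last (q : MvPolynomial (Fin (h + 1)) ℚ) :
    normalForm h (q * X (Fin.last h)) = 0 := by
  induction q using MvPolynomial.induction_on' with
  | monomial a c =>
    rw [X, monomial_mul, mul_one, normalForm_monomial,
      nfMonomial_of_last_ne_zero h (by simp), smul_zero]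
  | add p q hp hq => rw [add_mul, map_add, hp, hq, add_zero]

def relations : Set (MvPolynomial (Fin (h + 1)) ℚ) :=
  insert (X (Fin.last h)) (Set.range fun j : Fin (h + 1) => X j ^ 2 - sqExpansion (h + 1) (j + 1))

lemma X_sq_sub_sqExpansion (j : Fin (h + 1)) :
    X j ^ 2 - sqExpansion (h + 1) (j + 1) =
      (-1) ^ ((j : ℕ) + 1) * mumford (h + 1) (2 * (j + 1)) := by
  rw [← lam_succ, lam_sq_sub_sqExpansion]

lemma lam_self : lam (h + 1) (h + 1) = X (Fin.last h) := lam_succ (Fin.last h)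

theorem Rideal_eq_span_relations : Rideal (h + 1) = Ideal.span (relations h) := by
  apply le_antisymm
  · refine sup_le (Ideal.span_le.mpr ?_) (Ideal.span_le.mpr ?_)
    · rintro _ ⟨d, hd, rfl⟩
      obtain ⟨m, rfl⟩ | hodd := Nat.even_or_odd d
      · obtain ⟨j, rfl⟩ : ∃ j : Fin (h + 1), m = j + 1 :=
          ⟨⟨m - 1, by grind⟩, by grind⟩
        have hmum : mumford (h + 1) (2 * (j + 1)) =
            (-1) ^ ((j : ℕ) + 1) * (X j ^ 2 - sqExpansion (h + 1) (j + 1)) := by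
          rw [X_sq_sub_sqExpansion, ← mul_assoc, ← pow_add, Even.neg_one_pow ⟨_, rfl⟩,
            one_mul]
        rw [← two_mul, hmum]
        exact Ideal.mul_mem_left _ _ (Ideal.subset_span (Set.mem_insert_of_mem _ ⟨j, rfl⟩))
      · rw [mumford_of_odd _ hodd]
        exact zero_mem _
    · rintro _ rfl
      rw [lam_self]
      exact Ideal.subset_span (Set.mem_insert _ _)
  · refine Ideal.span_le.mpr ?_
    rintro _ (rfl | ⟨j, rfl⟩) <;> beta_reduce
    · rw [← lam_self]
      exact Ideal.mem_sup_right (Ideal.subset_span rfl)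
    · rw [SetLike.mem_coe, X_sq_sub_sqExpansion]
      exact Ideal.mem_sup_left (Ideal.mul_mem_left _ _
        (Ideal.subset_span ⟨_, Set.mem_Icc.mpr ⟨by omega, by omega⟩, rfl⟩))

lemma relations_subset_Rideal : relations h ⊆ Rideal (h + 1) := by
  rw [Rideal_eq_span_relations]
  exact Ideal.subset_span

theorem normalForm_eq_zero_of_mem {p : MvPolynomial (Fin (h + 1)) ℚ}
    (hp : p ∈ Rideal (h + 1)) : normalForm h p = 0 := by
  rw [Rideal_eq_span_relations] at hp
  refine map_eq_zero_of_mem_ideal_span (normalForm h) ?_ hp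
  rintro _ (rfl | ⟨j, rfl⟩) q
  exacts [normalForm_mul_X_last h q, normalForm_mul_X_sq_sub_sqExpansion h q j]

lemma sub_normalForm_mem_of_forall {I : Ideal (MvPolynomial (Fin (h + 1)) ℚ)}
    {p : MvPolynomial (Fin (h + 1)) ℚ}
    (H : ∀ d ∈ p.support, monomial d 1 - nfMonomial h d ∈ I) : p - normalForm h p ∈ I := by
  have hsum : p - normalForm h p =
      ∑ d ∈ p.support, p.coeff d • (monomial d 1 - nfMonomial h d) := by
    simp only [smul_sub, Finset.sum_sub_distrib, normalForm_apply, ← monomial_eq_smul_one]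
    rw [← p.as_sum]
  rw [hsum]
  exact Submodule.sum_mem _ fun d hd => by
    rw [smul_eq_C_mul]
    exact I.mul_mem_left _ (H d hd)

lemma monomial_sub_nfMonomial_mem (d : Fin (h + 1) →₀ ℕ) :
    monomial d 1 - nfMonomial h d ∈ Rideal (h + 1) := by
  induction hn : monoWeight (h + 1) d using Nat.strong_induction_on generalizing d with
  | _ n IH =>
  rcases ne_or_eq (d (Fin.last h)) 0 with hl | hl
  · rw [nfMonomial_of_last_ne_zero h hl, sub_zero,
      ← tsub_add_cancel_of_le (Finsupp.single_le_iff.mpr (Nat.one_le_iff_ne_zero.mpr hl)),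
      ← mul_one (1 : ℚ), ← monomial_mul, ← X]
    exact Ideal.mul_mem_left _ _ (relations_subset_Rideal h (Set.mem_insert _ _))
  by_cases hs : ∃ j, 2 ≤ d j
  · obtain ⟨j, hj⟩ := hs
    obtain ⟨i, hi, hd⟩ := exists_nfMonomial_eq_normalForm h hl hj
    set a := d - Finsupp.single i 2
    set p := monomial a (1 : ℚ) * sqExpansion (h + 1) (i + 1)
    have hda : monomial d (1 : ℚ) = monomial a 1 * X i ^ 2 := by
      rw [X_pow_eq_monomial, monomial_mul, one_mul,
        tsub_add_cancel_of_le (Finsupp.single_le_iff.mpr hi)]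
    have hsplit : monomial d 1 - normalForm h p =
        monomial a 1 * (X i ^ 2 - sqExpansion (h + 1) (i + 1)) + (p - normalForm h p) := by
      rw [hda]; ring
    rw [hd, hsplit]
    refine add_mem (Ideal.mul_mem_left _ _ ?_) (sub_normalForm_mem_of_forall h fun e he =>
      IH _ (hn ▸ monoWeight_lt_of_mem_support_reduction (h + 1) hi he) e rfl)
    exact relations_subset_Rideal h (Set.mem_insert_of_mem _ ⟨i, rfl⟩)
  · rw [nfMonomial_of_le_one h hl fun i => by grind, sub_self]
    exact zero_mem _

lemma sub_normalForm_mem (p : MvPolynomial (Fin (h + 1)) ℚ) :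
    p - normalForm h p ∈ Rideal (h + 1) :=
  sub_normalForm_mem_of_forall h fun d _ => monomial_sub_nfMonomial_mem h d

def sqfreeExp (J : Finset (Fin h)) : Fin (h + 1) →₀ ℕ :=
  ∑ j ∈ J, Finsupp.single j.castSucc 1

lemma sqfreeExp_castSucc (J : Finset (Fin h)) (j : Fin h) :
    sqfreeExp h J j.castSucc = if j ∈ J then 1 else 0 := by
  simp [sqfreeExp, Finsupp.finsetSum_apply, Finsupp.single_apply]

lemma sqfreeExp_last (J : Finset (Fin h)) : sqfreeExp h J (Fin.last h) = 0 := by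
  simp [sqfreeExp, Finsupp.finsetSum_apply, Fin.castSucc_ne_last]

lemma sqfreeExp_le_one (J : Finset (Fin h)) (i : Fin (h + 1)) : sqfreeExp h J i ≤ 1 := by
  induction i using Fin.lastCases with
  | last => simp [sqfreeExp_last]
  | cast j => rw [sqfreeExp_castSucc]; split <;> omega

lemma sqfreeExp_injective : Function.Injective (sqfreeExp h) := by
  intro J K hJK
  ext j
  have := congrArg (· j.castSucc) hJK
  simp only [sqfreeExp_castSucc] at this
  split_ifs at this <;> simp_all

lemma exists_sqfreeExp_eq {d : Fin (h + 1) →₀ ℕ} (hd : d (Fin.last h) = 0)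
    (hle : ∀ i, d i ≤ 1) : ∃ J, sqfreeExp h J = d := by
  refine ⟨Finset.univ.filter fun j : Fin h => d j.castSucc = 1, Finsupp.ext fun i => ?_⟩
  induction i using Fin.lastCases with
  | last => rw [sqfreeExp_last, hd]
  | cast j =>
    have := hle j.castSucc
    simp only [sqfreeExp_castSucc, Finset.mem_filter_univ]
    split <;> omega

lemma prod_lam_eq_monomial_sqfreeExp (J : Finset (Fin h)) :
    ∏ j ∈ J, lam (h + 1) (j + 1) = monomial (sqfreeExp h J) 1 := by
  rw [sqfreeExp, monomial_sum_one]
  exact Finset.prod_congr rfl fun j _ => lam_succ j.castSucc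

lemma normalForm_monomial_sqfreeExp (J : Finset (Fin h)) :
    normalForm h (monomial (sqfreeExp h J) 1) = monomial (sqfreeExp h J) 1 := by
  rw [normalForm_monomial, one_smul,
    nfMonomial_of_le_one h (sqfreeExp_last h J) (sqfreeExp_le_one h J)]

lemma normalForm_mem_span_sqfree (p : MvPolynomial (Fin (h + 1)) ℚ) :
    normalForm h p ∈ Submodule.span ℚ (Set.range fun J => monomial (sqfreeExp h J) 1) := by
  suffices H : ∀ d, nfMonomial h d ∈
      Submodule.span ℚ (Set.range fun J => monomial (sqfreeExp h J) (1 : ℚ)) by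
    rw [normalForm_apply]
    exact Submodule.sum_mem _ fun d _ => Submodule.smul_mem _ _ (H d)
  intro d
  induction hn : monoWeight (h + 1) d using Nat.strong_induction_on generalizing d with
  | _ n IH =>
  rcases ne_or_eq (d (Fin.last h)) 0 with hl | hl
  · rw [nfMonomial_of_last_ne_zero h hl]
    exact zero_mem _
  by_cases hs : ∃ j, 2 ≤ d j
  · obtain ⟨j, hj⟩ := hs
    obtain ⟨i, hi, hd⟩ := exists_nfMonomial_eq_normalForm h hl hj
    rw [hd, normalForm_apply]
    exact Submodule.sum_mem _ fun e he => Submodule.smul_mem _ _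
      (IH _ (hn ▸ monoWeight_lt_of_mem_support_reduction (h + 1) hi he) e rfl)
  · have hle : ∀ i, d i ≤ 1 := fun i => by grind
    obtain ⟨J, rfl⟩ := exists_sqfreeExp_eq h hl hle
    rw [nfMonomial_of_le_one h hl hle]
    exact Submodule.subset_span ⟨J, rfl⟩

end NormalForm

end Mumford

/-- **Monomial basis of ℛ_g (van der Geer).**
For `g ≥ 1`, the `2^{g−1}` classes `λ_J = ∏_{j∈J} λ_j`, for `J ⊆ {1,…,g−1}`, form
a `ℚ`-basis of `ℛ_g`; in particular `dim_ℚ ℛ_g = 2^{g−1}`. -/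
theorem Rring_lambda_basis (g : ℕ) (hg : 1 ≤ g) :
    LinearIndependent ℚ (fun J : Finset (Fin (g - 1)) =>
        Ideal.Quotient.mk (Rideal g) (∏ j ∈ J, lam g ((j : ℕ) + 1))) ∧
    Submodule.span ℚ (Set.range (fun J : Finset (Fin (g - 1)) =>
        Ideal.Quotient.mk (Rideal g) (∏ j ∈ J, lam g ((j : ℕ) + 1)))) = ⊤ ∧
    Module.finrank ℚ (Rring g) = 2 ^ (g - 1) := by
  obtain ⟨h, rfl⟩ : ∃ h, g = h + 1 := ⟨g - 1, by omega⟩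
  let π := (Ideal.Quotient.mkₐ ℚ (Rideal (h + 1))).toLinearMap
  let b := fun J : Finset (Fin h) => (monomial (Mumford.sqfreeExp h J) 1 : MvPolynomial _ ℚ)
  have hfamily : (fun J : Finset (Fin h) =>
      Ideal.Quotient.mk (Rideal (h + 1)) (∏ j ∈ J, lam (h + 1) ((j : ℕ) + 1))) = π ∘ b := by
    ext J
    simp [π, b, Mumford.prod_lam_eq_monomial_sqfreeExp]
  have hind : LinearIndependent ℚ (π ∘ b) :=
    Mumford.linearIndependent_comp_of_retraction π (Mumford.normalForm h)
      (fun x hx => Mumford.normalForm_eq_zero_of_mem h (Ideal.Quotient.eq_zero_iff_mem.mp hx))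
      ((basisMonomials _ ℚ).linearIndependent.comp _ (Mumford.sqfreeExp_injective h))
      (Mumford.normalForm_monomial_sqfreeExp h)
  have hspan : Submodule.span ℚ (Set.range (π ∘ b)) = ⊤ :=
    Mumford.span_range_comp_eq_top π (Mumford.normalForm h) Ideal.Quotient.mk_surjective
      (fun x => ((Ideal.Quotient.mk_eq_mk_iff_sub_mem _ _).mpr
        (Mumford.sub_normalForm_mem h x)).symm)
      (Mumford.normalForm_mem_span_sqfree h)
  -- `Fin (h + 1 - 1)` reduces to `Fin h`, so `hfamily` transports directly.
  refine ⟨hfamily ▸ hind, hfamily ▸ hspan, ?_⟩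
  rw [Module.finrank_eq_card_basis (Module.Basis.mk hind hspan.ge), Fintype.card_finset,
    Fintype.card_fin]
  rfl

end
end

section
/- Let g ≥ 1. Every homogeneous element of ℛ_g of degree strictly greater than g(g−1)/2 is zero; i.e., the graded piece of ℛ_g in degree k vanishes for all k > g(g−1)/2. -/
/-!
Call `∑ dᵢ (i+1)²` the energy of a monomial `∏ λ_{i+1}^{dᵢ}`; for a fixed weighted degree `w`
it is at most `g w`. Modulo `I_g + (λ_g)`, a monomial of weighted degree above `g(g-1)/2` either
contains `λ_g`, or contains a square `λ_e²` with `e < g`. In the second case the Mumford relation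
`m_{2e}` rewrites `λ_e²` as a combination of products `λ_i λ_{2e-i}` with `i ≠ e`, and since
`i² + (2e-i)² > 2e²` this replaces the monomial by monomials of the same degree and strictly larger
energy (or by zero, when an index exceeds `g`). Induction on the deficit `g w - energy` leaves
only square-free monomials in `λ_1, …, λ_{g-1}`, whose degree is at most `1 + ⋯ + (g-1) = g(g-1)/2`.
-/

open MvPolynomial

noncomputable section

theorem lam_eq_zero_of_lt {h m : ℕ} (hm : h < m) : lam h m = 0 := by
  rw [lam, dif_neg (by omega), dif_neg (by omega)]

theorem lam_succ {h : ℕ} (j : Fin h) : lam h ((j : ℕ) + 1) = X j := by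
  rw [lam, dif_neg (by omega), dif_pos (show (j : ℕ) + 1 ≤ h from j.isLt)]
  rfl

def lamExp (h m : ℕ) : Fin h →₀ ℕ :=
  if hm : 1 ≤ m ∧ m ≤ h then Finsupp.single ⟨m - 1, by omega⟩ 1 else 0

theorem lam_eq_monomial {h m : ℕ} (hm : m ≤ h) : lam h m = monomial (lamExp h m) 1 := by
  unfold lam lamExp
  split_ifs <;> first | omega | rfl

abbrev weightedDeg (h : ℕ) : (Fin h →₀ ℕ) →+ ℕ := Finsupp.weight fun i : Fin h => (i : ℕ) + 1

abbrev energy (h : ℕ) : (Fin h →₀ ℕ) →+ ℕ := Finsupp.weight fun i : Fin h => ((i : ℕ) + 1) ^ 2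

theorem energy_le_mul_weightedDeg {h : ℕ} (d : Fin h →₀ ℕ) :
    energy h d ≤ h * weightedDeg h d := by
  simp only [Finsupp.weight_apply, Finsupp.sum, Finset.mul_sum, smul_eq_mul]
  refine Finset.sum_le_sum fun i _ => ?_
  calc d i * ((i : ℕ) + 1) ^ 2 = d i * ((i : ℕ) + 1) * ((i : ℕ) + 1) := by ring
    _ ≤ d i * ((i : ℕ) + 1) * h := Nat.mul_le_mul_left _ i.isLt
    _ = h * (d i * ((i : ℕ) + 1)) := by ring

theorem weightedDeg_lamExp {h m : ℕ} (hm : m ≤ h) : weightedDeg h (lamExp h m) = m := by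
  unfold lamExp
  split_ifs with h1
  · simp [Finsupp.weight_single]
    omega
  · simp only [map_zero]
    omega

theorem energy_lamExp {h m : ℕ} (hm : m ≤ h) : energy h (lamExp h m) = m ^ 2 := by
  unfold lamExp
  split_ifs with h1
  · simp [Finsupp.weight_single, Nat.sub_add_cancel h1.1]
  · simp [show m = 0 by omega]

theorem weightedDeg_le_of_le_one {n : ℕ} (d : Fin (n + 1) →₀ ℕ) (hd : ∀ j, d j ≤ 1)
    (hlast : d (Fin.last n) = 0) : weightedDeg (n + 1) d ≤ (n + 1) * n / 2 := by
  have hterm : ∀ j : Fin n, d j.castSucc * ((j : ℕ) + 1) ≤ (j : ℕ) + 1 := fun j => by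
    simpa using Nat.mul_le_mul_right ((j : ℕ) + 1) (hd j.castSucc)
  calc weightedDeg (n + 1) d = ∑ j : Fin (n + 1), d j * ((j : ℕ) + 1) := by
        simp [Finsupp.weight_apply, Finsupp.sum_fintype]
    _ ≤ ∑ j : Fin n, ((j : ℕ) + 1) := by
        rw [Fin.sum_univ_castSucc, hlast, zero_mul, add_zero]
        exact Finset.sum_le_sum fun j _ => by simpa using hterm j
    _ = ∑ i ∈ Finset.range (n + 1), i := by
        rw [Fin.sum_univ_eq_sum_range (· + 1), Finset.sum_range_succ', add_zero]
    _ = (n + 1) * n / 2 := by rw [Finset.sum_range_id, Nat.add_sub_cancel]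

theorem two_mul_sq_lt_sq_add_sq_sub {i e : ℕ} (hi : i ≤ 2 * e) (hne : i ≠ e) :
    2 * e ^ 2 < i ^ 2 + (2 * e - i) ^ 2 := by
  have hij : i + (2 * e - i) = 2 * e := by omega
  have hne' : i ≠ 2 * e - i := by omega
  generalize 2 * e - i = j at hij hne' ⊢
  zify at hij hne' ⊢
  nlinarith [sq_pos_of_ne_zero (sub_ne_zero.mpr hne')]

theorem lam_sq_mul_mem {h e : ℕ} (he : 1 ≤ e) (heh : e ≤ h) {J : Ideal (MvPolynomial (Fin h) ℚ)}
    (hJ : mumfordIdeal h ≤ J) (M : MvPolynomial (Fin h) ℚ)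
    (hM : ∀ i ∈ (Finset.range (2 * e + 1)).erase e, lam h i * lam h (2 * e - i) * M ∈ J) :
    lam h e ^ 2 * M ∈ J := by
  have hrel : mumford h (2 * e) * M ∈ J :=
    J.mul_mem_right M (hJ (Ideal.subset_span ⟨2 * e, ⟨by omega, by omega⟩, rfl⟩))
  have hsplit : mumford h (2 * e) * M = (-1) ^ e * (lam h e ^ 2 * M) +
      ∑ i ∈ (Finset.range (2 * e + 1)).erase e,
        (-1) ^ (2 * e - i) * (lam h i * lam h (2 * e - i) * M) := by
    have he_mem : e ∈ Finset.range (2 * e + 1) := Finset.mem_range.mpr (by omega)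
    rw [mumford, ← Finset.add_sum_erase _ _ he_mem, add_mul, Finset.sum_mul,
      show 2 * e - e = e by omega]
    congr 1
    · ring
    · exact Finset.sum_congr rfl fun i _ => by ring
  have hsign : (-1) ^ e * (lam h e ^ 2 * M) ∈ J := by
    have := J.sub_mem hrel (J.sum_mem fun i hi => J.mul_mem_left ((-1) ^ (2 * e - i)) (hM i hi))
    rwa [hsplit, add_sub_cancel_right] at this
  simpa [← mul_assoc, ← mul_pow] using J.mul_mem_left ((-1) ^ e) hsign

theorem lam_sq_mul_monomial_mem {h e : ℕ} (he : 1 ≤ e) (heh : e ≤ h)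
    {J : Ideal (MvPolynomial (Fin h) ℚ)} (hJ : mumfordIdeal h ≤ J) (d : Fin h →₀ ℕ)
    (hmore : ∀ d', weightedDeg h d' = 2 * e + weightedDeg h d →
      2 * e ^ 2 + energy h d < energy h d' → monomial d' 1 ∈ J) :
    lam h e ^ 2 * monomial d 1 ∈ J := by
  refine lam_sq_mul_mem he heh hJ _ fun i hi => ?_
  obtain ⟨hie, hi⟩ := Finset.mem_erase.mp hi
  replace hi : i ≤ 2 * e := Nat.lt_succ_iff.mp (Finset.mem_range.mp hi)
  by_cases hih : h < i
  · simp [lam_eq_zero_of_lt hih]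
  by_cases hjh : h < 2 * e - i
  · simp [lam_eq_zero_of_lt hjh]
  rw [lam_eq_monomial (by omega), lam_eq_monomial (by omega), monomial_mul, monomial_mul,
    one_mul, one_mul]
  apply hmore
  · simp only [map_add, weightedDeg_lamExp (by omega : i ≤ h),
      weightedDeg_lamExp (by omega : 2 * e - i ≤ h)]
    omega
  · simp only [map_add, energy_lamExp (by omega : i ≤ h), energy_lamExp (by omega : 2 * e - i ≤ h)]
    have := two_mul_sq_lt_sq_add_sq_sub hi hie
    omega

theorem monomial_mem_Rideal_of_last_ne_zero {n : ℕ} (d : Fin (n + 1) →₀ ℕ)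
    (hlast : d (Fin.last n) ≠ 0) : monomial d 1 ∈ Rideal (n + 1) := by
  obtain ⟨c, hc⟩ : ∃ c, Finsupp.single (Fin.last n) 1 + c = d :=
    ⟨_, add_tsub_cancel_of_le (Finsupp.single_le_iff.mpr (Nat.one_le_iff_ne_zero.mpr hlast))⟩
  rw [← hc, monomial_single_add, pow_one]
  refine Ideal.mem_sup_right (Ideal.mul_mem_right _ _ (Ideal.subset_span ?_))
  simpa using (lam_succ (Fin.last n)).symm

theorem monomial_mem_Rideal {n : ℕ} (d : Fin (n + 1) →₀ ℕ)
    (hd : (n + 1) * n / 2 < weightedDeg (n + 1) d) : monomial d 1 ∈ Rideal (n + 1) := by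
  induction d using
    (measure fun d => (n + 1) * weightedDeg (n + 1) d - energy (n + 1) d).wf.induction with
  | h d ih =>
  by_cases hlast : d (Fin.last n) = 0
  · by_cases hsq : ∃ j, 2 ≤ d j
    · obtain ⟨j, hj⟩ := hsq
      obtain ⟨c, hc⟩ : ∃ c, Finsupp.single j 2 + c = d :=
        ⟨_, add_tsub_cancel_of_le (Finsupp.single_le_iff.mpr hj)⟩
      rw [← hc, monomial_single_add, ← lam_succ]
      refine lam_sq_mul_monomial_mem (e := (j : ℕ) + 1) (by omega) j.isLt le_sup_left _
        fun d' hdeg hen => ?_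
      have hdeg' : weightedDeg (n + 1) d' = weightedDeg (n + 1) d := by
        simp [← hc, hdeg, Finsupp.weight_single]
      have hen' : energy (n + 1) d < energy (n + 1) d' := by
        simp only [← hc, map_add, Finsupp.weight_single]
        simpa [mul_comm] using hen
      refine ih d' ?_ (hdeg' ▸ hd)
      have := energy_le_mul_weightedDeg d'
      change (n + 1) * weightedDeg (n + 1) d' - energy (n + 1) d' <
        (n + 1) * weightedDeg (n + 1) d - energy (n + 1) d
      rw [hdeg'] at this ⊢
      omega
    · push Not at hsq
      have hsqfree : ∀ j, d j ≤ 1 := fun j => Nat.le_of_lt_succ (hsq j)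
      exact absurd hd (not_lt.mpr (weightedDeg_le_of_le_one d hsqfree hlast))
  · exact monomial_mem_Rideal_of_last_ne_zero d hlast

theorem mem_ideal_of_forall_monomial_mem {σ R : Type*} [CommSemiring R]
    {J : Ideal (MvPolynomial σ R)} {P : MvPolynomial σ R}
    (hP : ∀ d ∈ P.support, monomial d 1 ∈ J) : P ∈ J := by
  rw [P.as_sum]
  exact J.sum_mem fun d hd => by
    simpa [C_mul_monomial] using J.mul_mem_left (C (coeff d P)) (hP d hd)

/-- **Vanishing above the socle degree (van der Geer).**
For `g ≥ 1`, every homogeneous element of `ℛ_g` of degree `k > g(g−1)/2` vanishes. -/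
theorem Rring_vanishing (g : ℕ) (hg : 1 ≤ g) (k : ℕ) (hk : g * (g - 1) / 2 < k)
    (x : Rring g) (hx : x ∈ homogR g k) : x = 0 := by
  obtain ⟨n, rfl⟩ : ∃ n, g = n + 1 := ⟨g - 1, by omega⟩
  rw [Nat.add_sub_cancel] at hk
  obtain ⟨P, hP, rfl⟩ := hx
  exact Ideal.Quotient.eq_zero_iff_mem.mpr <| mem_ideal_of_forall_monomial_mem fun d hd =>
    monomial_mem_Rideal d (hP (mem_support_iff.mp hd) ▸ hk)

end
end

section
/- Let k ≥ 2 and let c := (1+ℓ)·∏_{i=2}^{k+1} (1+z_1+z_i) in the polynomial ring ℚ[z_1,…,z_{k+1},ℓ]. Then [c]_{k+1} − z_1·[c/(1+z_1)]_k − (z_2·⋯·z_{k+1})·[c/((1+z_2)⋯(1+z_{k+1}))]_1 = −(k+1)·z_1·z_2·⋯·z_{k+1}. -/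
open MvPolynomial

/-- The truncated geometric series `Σ_{t=0}^{d} (−w)^t`, so that the degree-`d`
homogeneous component of `P * geom d w` is the degree-`d` component of the power
series expansion `P/(1+w)`. -/
noncomputable def geom {σ : Type*} (d : ℕ) (w : MvPolynomial σ ℚ) : MvPolynomial σ ℚ :=
  ∑ t ∈ Finset.range (d + 1), (-w) ^ t

/-!
Write `c = ∏ₒ (1 + aₒ)` with `o` running over `{ℓ} ∪ {2, …, k+1}`, `a_ℓ = ℓ` and
`aᵢ = z₁ + zᵢ`, all linear. Since `(1 + z₁) · (c/(1 + z₁)) = c`, the first two terms add up to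
`[c/(1 + z₁)]_{k+1}`, the top-degree part of `c/(1 + z₁)`, which Vieta's formula identifies with
`∏ₒ (aₒ − z₁) = (ℓ − z₁) · z₂ ⋯ z_{k+1}`. The last term only sees the linear part
`ℓ + k z₁` of `c/((1 + z₂) ⋯ (1 + z_{k+1}))`.
-/

open Finset

theorem Finset.prod_add_eq_sum_esymm {ι R : Type*} [CommSemiring R] (s : Finset ι) (a : ι → R)
    (y : R) : ∏ i ∈ s, (y + a i) = ∑ j ∈ range (#s + 1), (s.val.map a).esymm j * y ^ (#s - j) := by
  have := congrArg (Polynomial.eval y) (Multiset.prod_X_add_C_eq_sum_esymm (s.val.map a))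
  simp only [Polynomial.eval_multiset_prod, Polynomial.eval_finsetSum, Multiset.map_map,
    Function.comp_def, Polynomial.eval_add, Polynomial.eval_X, Polynomial.eval_C,
    Polynomial.eval_mul, Polynomial.eval_pow, Multiset.card_map, card_val] at this
  exact this

namespace MvPolynomial

section CommRing

variable {σ R : Type*} [CommRing R]

attribute [local instance] gradedAlgebra

theorem homogeneousComponent_mul_of_isHomogeneous_right {p q : MvPolynomial σ R} {i n : ℕ}
    (hq : q.IsHomogeneous i) (h : i ≤ n) :
    homogeneousComponent n (p * q) = homogeneousComponent (n - i) p * q := by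
  simp only [← decomposition.decompose'_apply]
  exact DirectSum.coe_decompose_mul_of_right_mem_of_le (homogeneousSubmodule σ R) hq h

theorem homogeneousComponent_prod_one_add {ι : Type*} {s : Finset ι} {a : ι → MvPolynomial σ R}
    (ha : ∀ i ∈ s, (a i).IsHomogeneous 1) (m : ℕ) :
    homogeneousComponent m (∏ i ∈ s, (1 + a i)) = (s.val.map a).esymm m := by
  rw [prod_one_add, map_sum, Finset.esymm_map_val, powersetCard_eq_filter, sum_filter]
  refine sum_congr rfl fun t ht => ?_
  have hom : (∏ i ∈ t, a i).IsHomogeneous #t := by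
    simpa using IsHomogeneous.prod t a (fun _ => 1) fun i hi => ha i (mem_powerset.1 ht hi)
  exact (homogeneousComponent_of_mem hom).trans (if_congr eq_comm rfl rfl)

theorem homogeneousComponent_one_prod_one_add {ι : Type*} {s : Finset ι}
    {a : ι → MvPolynomial σ R} (ha : ∀ i ∈ s, (a i).IsHomogeneous 1) :
    homogeneousComponent 1 (∏ i ∈ s, (1 + a i)) = ∑ i ∈ s, a i := by
  rw [homogeneousComponent_prod_one_add ha, Finset.esymm_map_val, powersetCard_one, sum_map]
  simp

end CommRing

section Geom

variable {σ : Type*} {x : MvPolynomial σ ℚ}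

theorem homogeneousComponent_mul_geom (hx : x.IsHomogeneous 1) (P : MvPolynomial σ ℚ) (d : ℕ) :
    homogeneousComponent d (P * geom d x) =
      ∑ j ∈ range (d + 1), homogeneousComponent j P * (-x) ^ (d - j) := by
  rw [geom, mul_sum, map_sum,
    ← sum_range_reflect (fun j => homogeneousComponent j P * (-x) ^ (d - j))]
  refine sum_congr rfl fun t ht => ?_
  have ht : t ≤ d := Nat.lt_succ_iff.1 (mem_range.1 ht)
  rw [homogeneousComponent_mul_of_isHomogeneous_right (by simpa using hx.neg.pow t) ht]
  congr 2
  omega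

theorem homogeneousComponent_mul_geom_succ (hx : x.IsHomogeneous 1) (P : MvPolynomial σ ℚ)
    (d : ℕ) :
    homogeneousComponent (d + 1) (P * geom (d + 1) x) =
      homogeneousComponent (d + 1) P - x * homogeneousComponent d (P * geom d x) := by
  have hsplit : P * geom (d + 1) x = P * geom d x * (-x) + P := by
    rw [geom, geom_sum_succ, ← geom]
    ring
  rw [hsplit, map_add, homogeneousComponent_mul_of_isHomogeneous_right hx.neg (by omega)]
  simp only [add_tsub_cancel_right]
  ring

theorem homogeneousComponent_prod_one_add_mul_geom {ι : Type*} {s : Finset ι}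
    {a : ι → MvPolynomial σ ℚ} (ha : ∀ i ∈ s, (a i).IsHomogeneous 1) (hx : x.IsHomogeneous 1) :
    homogeneousComponent #s ((∏ i ∈ s, (1 + a i)) * geom #s x) = ∏ i ∈ s, (-x + a i) := by
  rw [homogeneousComponent_mul_geom hx, prod_add_eq_sum_esymm s a (-x)]
  exact sum_congr rfl fun j _ => by rw [homogeneousComponent_prod_one_add ha]

theorem geom_one (w : MvPolynomial σ ℚ) : geom 1 w = 1 - w := by
  simp [geom, sum_range_succ, sub_eq_add_neg]

theorem homogeneousComponent_one_prod_one_add_mul_prod_geom_one {ι κ : Type*} {s : Finset ι}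
    {t : Finset κ} {a : ι → MvPolynomial σ ℚ} {w : κ → MvPolynomial σ ℚ}
    (ha : ∀ i ∈ s, (a i).IsHomogeneous 1) (hw : ∀ j ∈ t, (w j).IsHomogeneous 1) :
    homogeneousComponent 1 ((∏ i ∈ s, (1 + a i)) * ∏ j ∈ t, geom 1 (w j)) =
      ∑ i ∈ s, a i - ∑ j ∈ t, w j := by
  have hprod : (∏ i ∈ s, (1 + a i)) * ∏ j ∈ t, geom 1 (w j) =
      ∏ i ∈ s.disjSum t, (1 + Sum.elim a (fun j => -w j) i) := by
    simp only [prod_disjSum, Sum.elim_inl, Sum.elim_inr, geom_one, sub_eq_add_neg]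
  rw [hprod, homogeneousComponent_one_prod_one_add, sum_disjSum]
  · simp only [Sum.elim_inl, Sum.elim_inr, sum_neg_distrib, sub_eq_add_neg]
  · rintro (i | j) hij
    exacts [ha i (inl_mem_disjSum.1 hij), (hw j (inr_mem_disjSum.1 hij)).neg]

end Geom

end MvPolynomial

theorem excess_contribution_star_general (k : ℕ) :
    let z : Fin (k + 1) → MvPolynomial (Fin (k + 2)) ℚ := fun i => X i.castSucc
    let ℓ : MvPolynomial (Fin (k + 2)) ℚ := X (Fin.last (k + 1))
    let c : MvPolynomial (Fin (k + 2)) ℚ := (1 + ℓ) * ∏ j : Fin k, (1 + z 0 + z j.succ)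
    homogeneousComponent (k + 1) c
        - z 0 * homogeneousComponent k (c * geom k (z 0))
        - (∏ j : Fin k, z j.succ) *
            homogeneousComponent 1 (c * ∏ j : Fin k, geom 1 (z j.succ))
      = -((k : MvPolynomial (Fin (k + 2)) ℚ) + 1) * ∏ i : Fin (k + 1), z i := by
  intro z ℓ c
  let a : Option (Fin k) → MvPolynomial (Fin (k + 2)) ℚ :=
    fun o => o.elim ℓ fun j => z 0 + z j.succ
  have ha : ∀ o, (a o).IsHomogeneous 1 := by
    rintro (_ | j)
    exacts [isHomogeneous_X _ _, (isHomogeneous_X _ _).add (isHomogeneous_X _ _)]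
  have hx : (z 0).IsHomogeneous 1 := isHomogeneous_X _ _
  have hc : c = ∏ o, (1 + a o) := by
    simp only [c, Fintype.prod_option, a, Option.elim, add_assoc]
  have top : homogeneousComponent (k + 1) c - z 0 * homogeneousComponent k (c * geom k (z 0))
      = (ℓ - z 0) * ∏ j : Fin k, z j.succ := by
    have vieta := homogeneousComponent_prod_one_add_mul_geom (s := univ) (fun o _ => ha o) hx
    rw [card_univ, Fintype.card_option, Fintype.card_fin] at vieta
    rw [← homogeneousComponent_mul_geom_succ hx, hc, vieta, Fintype.prod_option]
    simp only [a, Option.elim, neg_add_cancel_left]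
    ring
  have linear : homogeneousComponent 1 (c * ∏ j : Fin k, geom 1 (z j.succ)) = ℓ + k * z 0 := by
    rw [hc, homogeneousComponent_one_prod_one_add_mul_prod_geom_one (fun o _ => ha o)
      fun j _ => isHomogeneous_X _ _]
    simp only [a, Fintype.sum_option, Option.elim_none, Option.elim_some, sum_add_distrib,
      sum_const, card_univ, Fintype.card_fin, nsmul_eq_mul]
    ring
  rw [top, linear, Fin.prod_univ_succ]
  ring

/-- **Excess contribution of a star tree (Remark after Example 5.3).**
For `k ≥ 2`, with `c = (1+ℓ)·∏_{i=2}^{k+1}(1+z_1+z_i)` in `ℚ[z_1,…,z_{k+1},ℓ]`,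
one has
`[c]_{k+1} − z_1·[c/(1+z_1)]_k − (z_2⋯z_{k+1})·[c/((1+z_2)⋯(1+z_{k+1}))]_1
  = −(k+1)·z_1 z_2 ⋯ z_{k+1}`. -/
theorem excess_contribution_star (k : ℕ) (hk : 2 ≤ k) :
    let z : Fin (k + 1) → MvPolynomial (Fin (k + 2)) ℚ := fun i => X i.castSucc
    let ℓ : MvPolynomial (Fin (k + 2)) ℚ := X (Fin.last (k + 1))
    let c : MvPolynomial (Fin (k + 2)) ℚ := (1 + ℓ) * ∏ j : Fin k, (1 + z 0 + z j.succ)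
    homogeneousComponent (k + 1) c
        - z 0 * homogeneousComponent k (c * geom k (z 0))
        - (∏ j : Fin k, z j.succ) *
            homogeneousComponent 1 (c * ∏ j : Fin k, geom 1 (z j.succ))
      = -((k : MvPolynomial (Fin (k + 2)) ℚ) + 1) * ∏ i : Fin (k + 1), z i :=
  excess_contribution_star_general k
end

section
/- In ℚ[z_1,z_2,z_3,z_4,ℓ_1,ℓ_2] let c := (1+z_2)(1+z_1+z_3)(1+z_1+z_4)(1+ℓ_1)(1+ℓ_2). Then [c]_5 − z_1z_2·[c/((1+z_1)(1+z_2))]_3 − z_2z_3z_4·[c/((1+z_2)(1+z_3)(1+z_4))]_2 = z_1z_2z_3z_4·( −3·[c]_1 + 6z_1 + 3z_2 + 4(z_3+z_4) ). -/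
/-!
Taking homogeneous components is multiplicative in the graded sense:
`[P Q]_n = ∑_{i + j = n} [P]_i [Q]_j`. Every factor occurring here has known components:
`1 + L` with `L` linear has components `1` and `L`, and the truncated series `geom d w` with `w`
linear has components `(-w)^k` for `k ≤ d`. Expanding the Cauchy products computes every bracket
explicitly, after which the identity is a plain polynomial identity.
-/

open MvPolynomial

namespace MvPolynomial

open Finset

variable {σ R : Type*} [CommSemiring R]

attribute [local instance] gradedAlgebra in
theorem homogeneousComponent_mul (p q : MvPolynomial σ R) (n : ℕ) :
    homogeneousComponent n (p * q) =
      ∑ k ∈ antidiagonal n, homogeneousComponent k.1 p * homogeneousComponent k.2 q := by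
  simp only [← decomposition.decompose'_apply]
  rw [← DirectSum.coe_mul_apply_eq_sum_antidiagonal]
  exact congrArg (fun x => (x n : MvPolynomial σ R))
    (DirectSum.decompose_mul (homogeneousSubmodule σ R) p q)

theorem homogeneousComponent_one (n : ℕ) :
    homogeneousComponent n (1 : MvPolynomial σ R) = if n = 0 then 1 else 0 :=
  homogeneousComponent_of_mem (isHomogeneous_one σ R)

theorem homogeneousComponent_X (n : ℕ) (i : σ) :
    homogeneousComponent n (X i : MvPolynomial σ R) = if n = 1 then X i else 0 :=
  homogeneousComponent_of_mem (isHomogeneous_X R i)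

end MvPolynomial

theorem homogeneousComponent_geom {σ : Type*} {w : MvPolynomial σ ℚ} (hw : w.IsHomogeneous 1)
    (d k : ℕ) : homogeneousComponent k (geom d w) = if k ≤ d then (-w) ^ k else 0 := by
  have hpow (t : ℕ) : homogeneousComponent k ((-w) ^ t) = if k = t then (-w) ^ t else 0 :=
    homogeneousComponent_of_mem (by simpa using hw.neg.pow t)
  simp [geom, hpow, Finset.sum_ite_eq]

/-- **Example 5.4: excess contribution for g = 6, leaf at the root.**
In `ℚ[z_1,z_2,z_3,z_4,ℓ_1,ℓ_2]` with
`c = (1+z_2)(1+z_1+z_3)(1+z_1+z_4)(1+ℓ_1)(1+ℓ_2)`: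
`[c]_5 − z_1 z_2·[c/((1+z_1)(1+z_2))]_3 − z_2 z_3 z_4·[c/((1+z_2)(1+z_3)(1+z_4))]_2
  = z_1 z_2 z_3 z_4·(−3[c]_1 + 6z_1 + 3z_2 + 4(z_3+z_4))`. -/
theorem excess_contribution_g6_mixed :
    let z1 : MvPolynomial (Fin 6) ℚ := X 0
    let z2 : MvPolynomial (Fin 6) ℚ := X 1
    let z3 : MvPolynomial (Fin 6) ℚ := X 2
    let z4 : MvPolynomial (Fin 6) ℚ := X 3
    let l1 : MvPolynomial (Fin 6) ℚ := X 4
    let l2 : MvPolynomial (Fin 6) ℚ := X 5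
    let c := (1 + z2) * (1 + z1 + z3) * (1 + z1 + z4) * (1 + l1) * (1 + l2)
    homogeneousComponent 5 c
        - z1 * z2 * homogeneousComponent 3 (c * geom 3 z1 * geom 3 z2)
        - z2 * z3 * z4 * homogeneousComponent 2 (c * geom 2 z2 * geom 2 z3 * geom 2 z4)
      = z1 * z2 * z3 * z4 *
          (-3 * homogeneousComponent 1 c + 6 * z1 + 3 * z2 + 4 * (z3 + z4)) := by
  simp only [homogeneousComponent_mul, Finset.Nat.sum_antidiagonal_succ,
    Finset.Nat.antidiagonal_zero, Finset.sum_singleton, map_add, homogeneousComponent_one,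
    homogeneousComponent_X, homogeneousComponent_geom (isHomogeneous_X ℚ _),
    Nat.reduceAdd, Nat.reduceEqDiff, Nat.reduceLeDiff, ↓reduceIte]
  ring
end
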